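/- Let π₁ be the 5×5 antisymmetric matrix on ℝ⁵ with coordinates (q₁,q₂,p₁,p₂,c) given by rows: π₁ = [[0,0,−q₁,1,2p₂],[0,0,−q₂,0,2p₁+2q₁p₂],[q₁,q₂,0,−p₂,−p₂²+4q₁³−6q₁q₂−c],[−1,0,p₂,0,2q₂−3q₁²],[−2p₂,−2p₁−2q₁p₂,p₂²−4q₁³+6q₁q₂+c,−2q₂+3q₁²,0]]. Then π₁ satisfies the Jacobi identity, i.e., defines a Poisson bracket {F,G} = Σᵢⱼ π₁ⁱʲ ∂ᵢF ∂ⱼG on ℝ⁵. -/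
import Mathlib

lemma dhmul (a s : ℝ) : deriv (HMul.hMul a) s = a := by
  simpa using deriv_const_mul a (differentiableAt_id (x := s))

lemma dhsub (a s : ℝ) : deriv (HSub.hSub a) s = -1 := by
  have : HSub.hSub a = fun t : ℝ => a - t := rfl
  rw [this, deriv_const_sub, deriv_id'']

lemma dhadd (a s : ℝ) : deriv (HAdd.hAdd a) s = 1 := by
  have : HAdd.hAdd a = fun t : ℝ => a + t := rfl
  rw [this, deriv_const_add, deriv_id'']

/-- The non-canonical Poisson tensor π₁ on ℝ⁵ with coordinates
x = (q₁,q₂,p₁,p₂,c) = (x 0, x 1, x 2, x 3, x 4). -/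
noncomputable def piT (x : Fin 5 → ℝ) : Matrix (Fin 5) (Fin 5) ℝ :=
  !![0, 0, -x 0, 1, 2 * x 3;
     0, 0, -x 1, 0, 2 * x 2 + 2 * x 0 * x 3;
     x 0, x 1, 0, -x 3, -(x 3)^2 + 4*(x 0)^3 - 6*(x 0)*(x 1) - x 4;
     -1, 0, x 3, 0, 2 * x 1 - 3*(x 0)^2;
     -2 * x 3, -(2 * x 2 + 2 * x 0 * x 3), (x 3)^2 - 4*(x 0)^3 + 6*(x 0)*(x 1) + x 4,
       -(2 * x 1) + 3*(x 0)^2, 0]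

/-- Partial derivative ∂ₗ f at x. -/
noncomputable def pd (l : Fin 5) (f : (Fin 5 → ℝ) → ℝ) (x : Fin 5 → ℝ) : ℝ :=
  deriv (fun t => f (Function.update x l t)) (x l)

/-- Table of partial derivatives of the entries of `piT`:
`Dm x l j k = ∂ₗ (piT · j k) x`. -/
noncomputable def Dm (x : Fin 5 → ℝ) : Fin 5 → Matrix (Fin 5) (Fin 5) ℝ :=
  ![!![0,0,-1,0,0; 0,0,0,0,2*x 3; 1,0,0,0,12*(x 0)^2-6*x 1; 0,0,0,0,-6*x 0;
      0,-(2*x 3),-(12*(x 0)^2-6*x 1),6*x 0,0],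
    !![0,0,0,0,0; 0,0,-1,0,0; 0,1,0,0,-6*x 0; 0,0,0,0,2; 0,0,6*x 0,-2,0],
    !![0,0,0,0,0; 0,0,0,0,2; 0,0,0,0,0; 0,0,0,0,0; 0,-2,0,0,0],
    !![0,0,0,0,2; 0,0,0,0,2*x 0; 0,0,0,-1,-(2*x 3); 0,0,1,0,0;
      -2,-(2*x 0),2*x 3,0,0],
    !![0,0,0,0,0; 0,0,0,0,0; 0,0,0,0,-1; 0,0,0,0,0; 0,0,1,0,0]]

set_option maxHeartbeats 4000000 in
lemma pd_piT (x : Fin 5 → ℝ) (l j k : Fin 5) :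
    pd l (fun y => piT y j k) x = Dm x l j k := by
  fin_cases l <;> fin_cases j <;> fin_cases k <;>
  · simp (disch := fun_prop) [piT, pd, Dm, Function.update,
      deriv_add, deriv_sub, deriv_mul, deriv_pow, deriv_const_mul_field,
      deriv_mul_const_field, deriv_id'', dhmul, dhsub, dhadd, deriv_neg,
      Matrix.vecHead, Matrix.vecTail]
    try ring

set_option maxHeartbeats 4000000 in
/-- π₁ satisfies the Jacobi identity
Σₗ (π₁ˡⁱ∂ₗπ₁ʲᵏ + π₁ˡʲ∂ₗπ₁ᵏⁱ + π₁ˡᵏ∂ₗπ₁ⁱʲ) = 0, so it defines a Poisson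
bracket {F,G} = Σᵢⱼ π₁ⁱʲ ∂ᵢF ∂ⱼG on ℝ⁵. -/
theorem stmt19 (x : Fin 5 → ℝ) (i j k : Fin 5) :
    ∑ l : Fin 5,
      (piT x l i * pd l (fun y => piT y j k) x
       + piT x l j * pd l (fun y => piT y k i) x
       + piT x l k * pd l (fun y => piT y i j) x) = 0 := by
  simp only [pd_piT, Fin.sum_univ_five]
  fin_cases i <;> fin_cases j <;> fin_cases k <;>
  · simp [piT, Dm, Matrix.vecHead, Matrix.vecTail]
    try ring
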